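/- arXiv:2011.10422 — 5 statements merged into one kernel-verified Lean document; each statement's English description precedes it below -/
import Mathlib

section
/- Let A be a Banach algebra, B a C*-algebra, θ : A → B a continuous homomorphism, and α : A → A an antilinear (conjugate-linear) contraction. If ‖θ(f) + θ(α(f))*‖ ≤ 2‖f‖ for all f ∈ A, then ‖θ‖ ≤ 1 + √2. -/
open scoped ComplexConjugate

/-!
Put `x = θ f` and `a = θ (α f)`. In a C*-algebra `‖x x* x‖ = ‖x‖³`, and
`x x* x = x (x* + a) x - θ (f (α f) f)`, where `‖x* + a‖ = ‖x + a*‖ ≤ 2‖f‖`. Hence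
`‖x‖³ ≤ 2‖f‖‖x‖² + ‖θ‖‖f‖³ ≤ (2‖θ‖² + ‖θ‖)‖f‖³`, so `‖θ‖³ ≤ 2‖θ‖² + ‖θ‖`, i.e. `(‖θ‖ - 1)² ≤ 2`.
-/

lemma CStarRing.norm_mul_star_mul_self {E : Type*} [NonUnitalNormedRing E] [StarRing E]
    [CStarRing E] (x : E) : ‖x * star x * x‖ = ‖x‖ ^ 3 := by
  refine le_antisymm ?_ ?_
  · calc ‖x * star x * x‖ ≤ ‖x‖ * ‖star x‖ * ‖x‖ := norm_mul₃_le
      _ = ‖x‖ ^ 3 := by rw [norm_star]; ring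
  · rcases (norm_nonneg x).eq_or_lt with hx | hx
    · rw [← hx, zero_pow three_ne_zero]; exact norm_nonneg _
    refine le_of_mul_le_mul_right ?_ hx
    calc ‖x‖ ^ 3 * ‖x‖ = ‖x * star x‖ * ‖x * star x‖ := by
          rw [CStarRing.norm_self_mul_star]; ring
      _ = ‖(x * star x) * (x * star x)‖ := by
          have := (CStarRing.norm_star_mul_self (x := x * star x)).symm
          simpa only [star_mul, star_star] using this
      _ ≤ ‖x * star x * x‖ * ‖star x‖ := by rw [← mul_assoc]; exact norm_mul_le _ _
      _ = ‖x * star x * x‖ * ‖x‖ := by rw [norm_star]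

lemma CStarRing.norm_pow_three_le {E : Type*} [NonUnitalNormedRing E] [StarRing E]
    [CStarRing E] (x a : E) : ‖x‖ ^ 3 ≤ ‖x‖ ^ 2 * ‖x + star a‖ + ‖x * a * x‖ := by
  have hdecomp : x * star x * x = x * (star x + a) * x - x * a * x := by noncomm_ring
  calc ‖x‖ ^ 3 = ‖x * (star x + a) * x - x * a * x‖ := by
        rw [← hdecomp, CStarRing.norm_mul_star_mul_self]
    _ ≤ ‖x‖ * ‖star x + a‖ * ‖x‖ + ‖x * a * x‖ :=
        (norm_sub_le _ _).trans (by gcongr; exact norm_mul₃_le)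
    _ = ‖x‖ ^ 2 * ‖x + star a‖ + ‖x * a * x‖ := by
        rw [← norm_star (star x + a), star_add, star_star]; ring

lemma ContinuousLinearMap.opNorm_pow_le_of_forall_pow_le {𝕜 𝕜₂ E F : Type*}
    [NontriviallyNormedField 𝕜] [NontriviallyNormedField 𝕜₂] [SeminormedAddCommGroup E]
    [SeminormedAddCommGroup F] [NormedSpace 𝕜 E] [NormedSpace 𝕜₂ F] {σ : 𝕜 →+* 𝕜₂}
    [RingHomIsometric σ] (T : E →SL[σ] F) {n : ℕ} (hn : n ≠ 0) {C : ℝ} (hC : 0 ≤ C)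
    (h : ∀ x, ‖T x‖ ^ n ≤ C * ‖x‖ ^ n) : ‖T‖ ^ n ≤ C := by
  have hroot : ‖T‖ ≤ C ^ (n⁻¹ : ℝ) := by
    refine T.opNorm_le_bound (by positivity) fun x ↦ ?_
    refine le_of_pow_le_pow_left₀ hn (by positivity) ?_
    rw [mul_pow, Real.rpow_inv_natCast_pow hC hn]
    exact h x
  simpa only [Real.rpow_inv_natCast_pow hC hn] using pow_le_pow_left₀ (norm_nonneg T) hroot n

lemma le_one_add_sqrt_two_of_pow_three_le {K : ℝ} (hK : 0 ≤ K) (h : K ^ 3 ≤ 2 * K ^ 2 + K) :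
    K ≤ 1 + √2 := by
  rcases hK.eq_or_lt with rfl | hK
  · positivity
  have hsq : (K - 1) ^ 2 ≤ 2 := by nlinarith
  linarith [le_abs_self (K - 1), Real.abs_le_sqrt hsq]

lemma norm_map_pow_three_le {A B F : Type*} [NormedRing A] [NormedRing B] [StarRing B]
    [CStarRing B] [FunLike F A B] [RingHomClass F A B] (θ : F) {α : A → A}
    (hα : ∀ f, ‖α f‖ ≤ ‖f‖) (h : ∀ f, ‖θ f + star (θ (α f))‖ ≤ 2 * ‖f‖) {K : ℝ} (hK₀ : 0 ≤ K)
    (hK : ∀ f, ‖θ f‖ ≤ K * ‖f‖) (f : A) : ‖θ f‖ ^ 3 ≤ (2 * K ^ 2 + K) * ‖f‖ ^ 3 := by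
  have hmiddle : ‖θ f * θ (α f) * θ f‖ ≤ K * ‖f‖ ^ 3 := by
    rw [← map_mul, ← map_mul]
    calc ‖θ (f * α f * f)‖ ≤ K * (‖f‖ * ‖α f‖ * ‖f‖) := (hK _).trans (by gcongr; exact norm_mul₃_le)
      _ ≤ K * (‖f‖ * ‖f‖ * ‖f‖) := by grw [hα f]
      _ = K * ‖f‖ ^ 3 := by ring
  calc ‖θ f‖ ^ 3 ≤ ‖θ f‖ ^ 2 * ‖θ f + star (θ (α f))‖ + ‖θ f * θ (α f) * θ f‖ :=
        CStarRing.norm_pow_three_le _ _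
    _ ≤ (K * ‖f‖) ^ 2 * (2 * ‖f‖) + K * ‖f‖ ^ 3 := by gcongr; exacts [hK f, h f]
    _ = (2 * K ^ 2 + K) * ‖f‖ ^ 3 := by ring

theorem stmt_0_general {A B : Type*}
    [NormedRing A] [NormedAlgebra ℂ A]
    [NormedRing B] [StarRing B] [CStarRing B] [NormedAlgebra ℂ B]
    (θ : A →ₐ[ℂ] B) (hθ : Continuous θ)
    (α : A →ₛₗ[starRingEnd ℂ] A) (hα : ∀ f, ‖α f‖ ≤ ‖f‖)
    (h : ∀ f : A, ‖θ f + star (θ (α f))‖ ≤ 2 * ‖f‖) :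
    ∀ f : A, ‖θ f‖ ≤ (1 + Real.sqrt 2) * ‖f‖ := by
  let T : A →L[ℂ] B := ⟨θ.toLinearMap, hθ⟩
  have hT : ∀ f, ‖θ f‖ ≤ ‖T‖ * ‖f‖ := T.le_opNorm
  have hcube : ‖T‖ ^ 3 ≤ 2 * ‖T‖ ^ 2 + ‖T‖ :=
    T.opNorm_pow_le_of_forall_pow_le three_ne_zero (by positivity)
      (norm_map_pow_three_le θ hα h (norm_nonneg T) hT)
  intro f
  grw [hT f, le_one_add_sqrt_two_of_pow_three_le (norm_nonneg T) hcube]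

/-- Theorem (basic bound): if `A` is a complex Banach algebra, `B` a C*-algebra,
`θ : A → B` a continuous algebra homomorphism, `α : A → A` a conjugate-linear
contraction, and `‖θ f + (θ (α f))*‖ ≤ 2‖f‖` for all `f`, then `‖θ‖ ≤ 1 + √2`. -/
theorem stmt_0 {A B : Type*}
    [NormedRing A] [NormedAlgebra ℂ A] [CompleteSpace A]
    [NormedRing B] [StarRing B] [CStarRing B] [NormedAlgebra ℂ B]
    [StarModule ℂ B] [CompleteSpace B]
    (θ : A →ₐ[ℂ] B) (hθ : Continuous θ)
    (α : A →ₛₗ[starRingEnd ℂ] A) (hα : ∀ f, ‖α f‖ ≤ ‖f‖)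
    (h : ∀ f : A, ‖θ f + star (θ (α f))‖ ≤ 2 * ‖f‖) :
    ∀ f : A, ‖θ f‖ ≤ (1 + Real.sqrt 2) * ‖f‖ :=
  stmt_0_general θ hθ α hα h
end

section
/- Let T ∈ Mₙ(ℂ) admit a unitary ρ-dilation for some ρ ≥ 1: there is a Hilbert space K containing ℂⁿ and a unitary U on K with Tᵐ = ρ·P f Uᵐ|ℂⁿ for all m ≥ 1, where P is the orthogonal projection of K onto ℂⁿ. Then for every polynomial p, ‖p(T) + (ρ−1)p(0)·I‖ ≤ ρ·sup{|p(z)| : |z| ≤ 1}. -/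
set_option maxHeartbeats 1000000
set_option synthInstance.maxHeartbeats 200000

open Polynomial

private lemma aux_commute_aeval {A : Type*} [Ring A] [Algebra ℂ A] {a b : A}
    (h : Commute a b) (p : ℂ[X]) : Commute (aeval a p) b := by
  induction p using Polynomial.induction_on' with
  | add p q hp hq => simpa [map_add] using hp.add_left hq
  | monomial m c =>
    rw [aeval_monomial]
    exact (Algebra.commute_algebraMap_left c b).mul_left (h.pow_left m)

private lemma aux_star_aeval {A : Type*} [Ring A] [Algebra ℂ A] [StarRing A]
    [StarModule ℂ A] (a : A) (p : ℂ[X]) :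
    star (aeval a p) = aeval (star a) (p.map (starRingEnd ℂ)) := by
  induction p using Polynomial.induction_on' with
  | add p q hp hq => simp [map_add, hp, hq]
  | monomial m c =>
    rw [aeval_monomial, map_monomial, aeval_monomial, star_mul, star_pow,
      ← algebraMap_star_comm, ← Algebra.commutes]
    rfl

/-- If `T ∈ Mₙ(ℂ)` admits a unitary `ρ`-dilation (`Tᵐ = ρ P Uᵐ|_{ℂⁿ}` for all
`m ≥ 1`), then `‖p(T) + (ρ-1)p(0)I‖ ≤ ρ · sup_{|z| ≤ 1} |p(z)|` for every
polynomial `p`. -/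
theorem stmt_5 {n : ℕ} {K : Type*} [NormedAddCommGroup K]
    [InnerProductSpace ℂ K] [CompleteSpace K]
    (T : EuclideanSpace ℂ (Fin n) →L[ℂ] EuclideanSpace ℂ (Fin n))
    (ρ : ℝ) (hρ : 1 ≤ ρ)
    (V : EuclideanSpace ℂ (Fin n) →ₗᵢ[ℂ] K)
    (U : K →L[ℂ] K)
    (hU₁ : ContinuousLinearMap.adjoint U ∘L U = 1)
    (hU₂ : U ∘L ContinuousLinearMap.adjoint U = 1)
    (hdil : ∀ m : ℕ, 1 ≤ m →
      T ^ m = (ρ : ℂ) • (ContinuousLinearMap.adjoint V.toContinuousLinearMap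
        ∘L (U ^ m) ∘L V.toContinuousLinearMap)) :
    ∀ p : ℂ[X],
      ‖aeval T p + (((ρ : ℂ) - 1) * p.eval 0) • 1‖
        ≤ ρ * sSup ((fun z : ℂ => ‖p.eval z‖) '' Metric.closedBall 0 1) := by
  have key : ∀ q : ℂ[X], aeval T q + (((ρ : ℂ) - 1) * q.eval 0) • 1
      = (ρ : ℂ) • (ContinuousLinearMap.adjoint V.toContinuousLinearMap
          ∘L (aeval U q) ∘L V.toContinuousLinearMap) := by
    have hVV : ContinuousLinearMap.adjoint V.toContinuousLinearMap
        ∘L V.toContinuousLinearMap = 1 :=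
      (ContinuousLinearMap.norm_map_iff_adjoint_comp_self _).mp fun x => V.norm_map x
    intro q
    induction q using Polynomial.induction_on' with
    | add p q hp hq =>
      rw [map_add, map_add, eval_add, ContinuousLinearMap.add_comp,
        ContinuousLinearMap.comp_add, smul_add, ← hp, ← hq]
      module
    | monomial m a =>
      rcases Nat.eq_zero_or_pos m with hm | hm
      · subst hm
        simp only [aeval_monomial, eval_monomial, pow_zero, mul_one,
          Algebra.algebraMap_eq_smul_one]
        have hVVx : ∀ x, ContinuousLinearMap.adjoint V.toContinuousLinearMap
            (V x) = x := fun x => by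
          have h := ContinuousLinearMap.ext_iff.mp hVV x
          exact h
        have h2 : (ContinuousLinearMap.adjoint V.toContinuousLinearMap).comp
            ((a • (1 : K →L[ℂ] K)).comp V.toContinuousLinearMap)
            = a • (1 : EuclideanSpace ℂ (Fin n) →L[ℂ] EuclideanSpace ℂ (Fin n)) := by
          ext x
          simp [hVVx]
        rw [h2]
        module
      · have h0 : (0:ℂ) ^ m = 0 := zero_pow (by omega)
        have h2 : (ContinuousLinearMap.adjoint V.toContinuousLinearMap).comp
            (((algebraMap ℂ (K →L[ℂ] K)) a * U ^ m).comp V.toContinuousLinearMap)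
            = a • ((ContinuousLinearMap.adjoint V.toContinuousLinearMap).comp
                ((U ^ m).comp V.toContinuousLinearMap)) := by
          ext x
          simp [Algebra.algebraMap_eq_smul_one, ContinuousLinearMap.mul_apply]
        rw [aeval_monomial, aeval_monomial, eval_monomial, h0, hdil m hm, h2,
          ← Algebra.smul_def]
        module
  intro p
  set Vc := V.toContinuousLinearMap with hVc
  set M := sSup ((fun z : ℂ => ‖p.eval z‖) '' Metric.closedBall 0 1) with hM
  have hρ0 : (0:ℝ) ≤ ρ := le_trans zero_le_one hρ
  -- basic facts about the set
  have hbdd : BddAbove ((fun z : ℂ => ‖p.eval z‖) '' Metric.closedBall 0 1) :=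
    ((isCompact_closedBall (0:ℂ) 1).image p.continuous.norm).bddAbove
  have hMge : ∀ z : ℂ, z ∈ Metric.closedBall (0:ℂ) 1 → ‖p.eval z‖ ≤ M := fun z hz =>
    le_csSup hbdd ⟨z, hz, rfl⟩
  have hM0 : 0 ≤ M :=
    le_trans (norm_nonneg _) (hMge 0 (Metric.mem_closedBall_self zero_le_one))
  rw [key p]
  have hVle : ‖Vc‖ ≤ 1 :=
    ContinuousLinearMap.opNorm_le_bound _ zero_le_one fun x => by
      rw [one_mul]; exact le_of_eq (V.norm_map x)
  have hVadle : ‖ContinuousLinearMap.adjoint Vc‖ ≤ 1 := by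
    rw [ContinuousLinearMap.adjoint.norm_map]; exact hVle
  have hcompbound : ‖ContinuousLinearMap.adjoint Vc ∘L (aeval U p) ∘L Vc‖ ≤ ‖aeval U p‖ := by
    calc ‖ContinuousLinearMap.adjoint Vc ∘L (aeval U p) ∘L Vc‖
        ≤ ‖ContinuousLinearMap.adjoint Vc‖ * ‖(aeval U p) ∘L Vc‖ :=
          ContinuousLinearMap.opNorm_comp_le _ _
      _ ≤ 1 * (‖aeval U p‖ * ‖Vc‖) := by
          refine mul_le_mul hVadle (ContinuousLinearMap.opNorm_comp_le _ _)
            (norm_nonneg _) zero_le_one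
      _ ≤ 1 * (‖aeval U p‖ * 1) := by
          refine mul_le_mul_of_nonneg_left ?_ zero_le_one
          exact mul_le_mul_of_nonneg_left hVle (norm_nonneg _)
      _ = ‖aeval U p‖ := by ring
  -- bound ‖aeval U p‖ by M
  have hUP : ‖aeval U p‖ ≤ M := by
    rcases subsingleton_or_nontrivial K with hK | hK
    · rw [Subsingleton.elim (aeval U p) 0, norm_zero]
      exact hM0
    · -- U is unitary and star-normal
      have hUmem : U ∈ unitary (K →L[ℂ] K) := by
        constructor
        · rw [ContinuousLinearMap.star_eq_adjoint, ContinuousLinearMap.mul_def]; exact hU₁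
        · rw [ContinuousLinearMap.star_eq_adjoint, ContinuousLinearMap.mul_def]; exact hU₂
      have hcomm : Commute (star U) U := by
        rw [Commute, SemiconjBy, ContinuousLinearMap.mul_def, ContinuousLinearMap.mul_def,
          ContinuousLinearMap.star_eq_adjoint, hU₁, hU₂]
      haveI hSN : IsStarNormal (aeval U p) := by
        constructor
        rw [aux_star_aeval]
        exact aux_commute_aeval
          ((aux_commute_aeval hcomm.symm p).symm) (p.map (starRingEnd ℂ))
      have hmap : spectrum ℂ (aeval U p) = (fun k => p.eval k) '' spectrum ℂ U :=
        spectrum.map_polynomial_aeval_of_nonempty U p (spectrum.nonempty U)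
      have hrad : spectralRadius ℂ (aeval U p) ≤ ENNReal.ofReal M := by
        rw [spectralRadius]
        refine iSup₂_le fun k hk => ?_
        rw [hmap] at hk
        obtain ⟨z, hz, rfl⟩ := hk
        have hz1 : z ∈ Metric.closedBall (0:ℂ) 1 := by
          have hcirc := spectrum.subset_circle_of_unitary hUmem hz
          rw [Metric.mem_sphere, dist_zero_right] at hcirc
          rw [Metric.mem_closedBall, dist_zero_right, hcirc]
        have hle : ‖p.eval z‖ ≤ M := hMge z hz1
        rw [← enorm_eq_nnnorm, ← ofReal_norm]
        exact ENNReal.ofReal_le_ofReal hle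
      rw [IsStarNormal.spectralRadius_eq_nnnorm (aeval U p),
        ← enorm_eq_nnnorm, ← ofReal_norm, ENNReal.ofReal_le_ofReal_iff hM0] at hrad
      exact hrad
  calc ‖(ρ:ℂ) • (ContinuousLinearMap.adjoint Vc ∘L (aeval U p) ∘L Vc)‖
      = ‖(ρ:ℂ)‖ * ‖ContinuousLinearMap.adjoint Vc ∘L (aeval U p) ∘L Vc‖ :=
        norm_smul (α := ℂ)
          (β := EuclideanSpace ℂ (Fin n) →L[ℂ] EuclideanSpace ℂ (Fin n)) _ _
    _ = ρ * ‖ContinuousLinearMap.adjoint Vc ∘L (aeval U p) ∘L Vc‖ := by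
        rw [Complex.norm_real, Real.norm_of_nonneg hρ0]
    _ ≤ ρ * M := mul_le_mul_of_nonneg_left (hcompbound.trans hUP) hρ0
end

section
/- Let A be a uniform algebra, θ : A → Mₙ(ℂ) a continuous unital homomorphism, and α : A → A a unital antilinear contraction. If the map θ_α(f) = (θ(f) + θ(α(f))*)/2 is a contraction, then for every f ∈ A the numerical range of θ_α(f) is contained in the convex hull of the spectrum of f. -/
open scoped InnerProductSpace

/-!
Since `α 1 = 1`, we have `θ_α (f - λ) = θ_α f - λ` for every `λ ∈ ℂ`. Hence for a unit vector `x`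
the point `w = ⟪x, θ_α f x⟫` satisfies `|w - λ| ≤ ‖θ_α (f - λ)‖ ≤ ‖f - λ‖ = max_p |f p - λ|`:
every closed disc containing the compact set `f(X) ⊆ σ(f)` contains `w`. A point outside the
convex hull of a compact planar set is separated from it by a line, and a disc whose centre lies far
away on the other side of that line contains the set but not the point. So
`w ∈ conv f(X) ⊆ conv σ(f)`.
-/

open Set in
theorem isCompact_convexHull {E : Type*} [NormedAddCommGroup E] [NormedSpace ℝ E]
    [FiniteDimensional ℝ E] {K : Set E} (hK : IsCompact K) : IsCompact (convexHull ℝ K) := by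
  let combo (m : ℕ) := fun p : (Fin m → ℝ) × (Fin m → E) => ∑ i, p.1 i • p.2 i
  let S (m : ℕ) := combo m '' (stdSimplex ℝ (Fin m) ×ˢ univ.pi fun _ => K)
  have hS : ∀ m, IsCompact (S m) := fun m =>
    ((isCompact_stdSimplex _ _).prod (isCompact_univ_pi fun _ => hK)).image (by fun_prop)
  -- Carathéodory: a point of `conv K` is a convex combination of at most `dim E + 1` points of `K`.
  suffices convexHull ℝ K = ⋃ m ∈ Iic (Module.finrank ℝ E + 1), S m by
    rw [this]; exact (finite_Iic _).isCompact_biUnion fun m _ => hS m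
  apply subset_antisymm
  · intro x hx
    obtain ⟨ι, _, z, w, hzK, hind, hpos, hw1, rfl⟩ := eq_pos_convex_span_of_mem_convexHull hx
    let e := Fintype.equivFin ι
    refine mem_biUnion (x := Fintype.card ι) ?_
      ⟨(w ∘ e.symm, z ∘ e.symm), ⟨⟨fun i => (hpos _).le, ?_⟩, fun i _ => hzK ⟨_, rfl⟩⟩, ?_⟩
    · exact hind.card_le_finrank_succ.trans (Nat.add_le_add_right (Submodule.finrank_le _) 1)
    · simpa [e.symm.sum_comp] using hw1
    · exact e.symm.sum_comp fun i => w i • z i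
  · simp only [iUnion_subset_iff]
    rintro m - _ ⟨⟨c, z⟩, ⟨hc, hz⟩, rfl⟩
    exact (convex_convexHull ℝ K).sum_mem (fun i _ => hc.1 i) hc.2
      fun i _ => subset_convexHull ℝ K (hz i trivial)

theorem mem_closedConvexHull_of_forall_exists_dist_le {E : Type*} [NormedAddCommGroup E]
    [InnerProductSpace ℝ E] [CompleteSpace E] {K : Set E} (hK : Bornology.IsBounded K) {w : E}
    (H : ∀ l, ∃ z ∈ K, dist w l ≤ dist z l) : w ∈ closedConvexHull ℝ K := by
  by_contra hw
  obtain ⟨φ, u, hφK, hφw⟩ :=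
    geometric_hahn_banach_closed_point convex_closedConvexHull isClosed_closedConvexHull hw
  set v := (InnerProductSpace.toDual ℝ E).symm φ
  have hv : ∀ y, φ y = ⟪v, y⟫_ℝ := fun y => by simp [v]
  obtain ⟨R, hR⟩ := hK.subset_closedBall w
  have hgap : 0 < φ w - u := by linarith
  obtain ⟨M, hM, hMR⟩ : ∃ M : ℝ, 0 < M ∧ R ^ 2 < 2 * M * (φ w - u) :=
    ⟨(R ^ 2 + 1) / (2 * (φ w - u)), by positivity, by field_simp; linarith⟩
  obtain ⟨z, hzK, hz⟩ := H (w - M • v)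
  have hzu : φ z < u := hφK z (subset_closedConvexHull hzK)
  have hzR : ‖z - w‖ ≤ R := by simpa [dist_eq_norm] using hR hzK
  have hsq : dist w (w - M • v) ^ 2 ≤ dist z (w - M • v) ^ 2 := by gcongr
  rw [dist_eq_norm, dist_eq_norm, sub_sub_cancel, show z - (w - M • v) = (z - w) + M • v by abel,
    norm_add_sq_real, inner_smul_right, real_inner_comm, ← hv, map_sub] at hsq
  nlinarith [sq_le_sq' (by linarith [norm_nonneg (z - w)]) hzR]

theorem ContinuousLinearMap.norm_inner_apply_self_le {𝕜 E : Type*} [RCLike 𝕜]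
    [SeminormedAddCommGroup E] [InnerProductSpace 𝕜 E] (T : E →L[𝕜] E) {x : E} (hx : ‖x‖ = 1) :
    ‖⟪x, T x⟫_𝕜‖ ≤ ‖T‖ :=
  calc ‖⟪x, T x⟫_𝕜‖ ≤ ‖x‖ * ‖T x‖ := norm_inner_le_norm _ _
    _ ≤ ‖x‖ * (‖T‖ * ‖x‖) := by gcongr; exact T.le_opNorm x
    _ = ‖T‖ := by rw [hx, one_mul, mul_one]

section Symmetrization

variable {A B : Type*} [Ring A] [Algebra ℂ A] [Ring B] [StarRing B] [Algebra ℂ B]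
  [StarModule ℂ B]

noncomputable def thetaAlpha (θ : A →ₐ[ℂ] B) (α : A →ₛₗ[starRingEnd ℂ] A) (f : A) : B :=
  (2 : ℂ)⁻¹ • (θ f + star (θ (α f)))

theorem thetaAlpha_sub_algebraMap (θ : A →ₐ[ℂ] B) {α : A →ₛₗ[starRingEnd ℂ] A} (hα1 : α 1 = 1)
    (f : A) (l : ℂ) :
    thetaAlpha θ α (f - algebraMap ℂ A l) = thetaAlpha θ α f - algebraMap ℂ B l := by
  have hα : α (algebraMap ℂ A l) = algebraMap ℂ A (starRingEnd ℂ l) := by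
    rw [Algebra.algebraMap_eq_smul_one, LinearMap.map_smulₛₗ, hα1, Algebra.algebraMap_eq_smul_one]
  have hstar : star (algebraMap ℂ B (starRingEnd ℂ l)) = algebraMap ℂ B l := by
    rw [← algebraMap_star_comm, Complex.star_def, Complex.conj_conj]
  simp only [thetaAlpha, map_sub, hα, AlgHom.commutes, star_sub, hstar]
  rw [Algebra.algebraMap_eq_smul_one (A := B)]
  module

end Symmetrization

theorem dist_inner_thetaAlpha_le {A E : Type*} [NormedRing A] [Algebra ℂ A]
    [NormedAddCommGroup E] [InnerProductSpace ℂ E] [CompleteSpace E]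
    (θ : A →ₐ[ℂ] (E →L[ℂ] E)) {α : A →ₛₗ[starRingEnd ℂ] A} (hα1 : α 1 = 1)
    (hθα : ∀ f, ‖thetaAlpha θ α f‖ ≤ ‖f‖) (f : A) {x : E} (hx : ‖x‖ = 1) (l : ℂ) :
    dist ⟪x, thetaAlpha θ α f x⟫_ℂ l ≤ ‖f - algebraMap ℂ A l‖ := by
  calc dist ⟪x, thetaAlpha θ α f x⟫_ℂ l = ‖⟪x, thetaAlpha θ α (f - algebraMap ℂ A l) x⟫_ℂ‖ := by
        rw [thetaAlpha_sub_algebraMap θ hα1]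
        simp [hx, dist_eq_norm]
    _ ≤ ‖thetaAlpha θ α (f - algebraMap ℂ A l)‖ := ContinuousLinearMap.norm_inner_apply_self_le _ hx
    _ ≤ ‖f - algebraMap ℂ A l‖ := hθα _

theorem ContinuousMap.exists_norm_le_norm_apply {X E : Type*} [TopologicalSpace X]
    [CompactSpace X] [Nonempty X] [NormedAddCommGroup E] (g : C(X, E)) : ∃ p, ‖g‖ ≤ ‖g p‖ := by
  obtain ⟨p, -, hp⟩ :=
    isCompact_univ.exists_isMaxOn Set.univ_nonempty (map_continuous g).norm.continuousOn
  exact ⟨p, (g.norm_le (norm_nonneg _)).2 fun q => hp (Set.mem_univ q)⟩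

theorem Subalgebra.range_subset_spectrum {X : Type*} [TopologicalSpace X]
    (A : Subalgebra ℂ C(X, ℂ)) (f : A) : Set.range (f : C(X, ℂ)) ⊆ spectrum ℂ f := by
  rw [← ContinuousMap.spectrum_eq_range]
  exact spectrum.subset_subalgebra f

theorem stmt_7_general {X : Type*} [TopologicalSpace X] [CompactSpace X]
    (A : Subalgebra ℂ C(X, ℂ))
    {n : ℕ}
    (θ : ↥A →ₐ[ℂ] (EuclideanSpace ℂ (Fin n) →L[ℂ] EuclideanSpace ℂ (Fin n)))
    (α : ↥A →ₛₗ[starRingEnd ℂ] ↥A) (hα1 : α 1 = 1)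
    (hcontr : ∀ f : A, ‖θ f + star (θ (α f))‖ ≤ 2 * ‖f‖) :
    ∀ f : A, ∀ x : EuclideanSpace ℂ (Fin n), ‖x‖ = 1 →
      ⟪x, ((2 : ℂ)⁻¹ • (θ f + star (θ (α f)))) x⟫_ℂ
        ∈ convexHull ℝ (spectrum ℂ f) := by
  intro f x hx
  show ⟪x, thetaAlpha θ α f x⟫_ℂ ∈ _
  have hθα : ∀ g, ‖thetaAlpha θ α g‖ ≤ ‖g‖ := fun g => by
    rw [thetaAlpha, norm_smul, norm_inv, Complex.norm_two, inv_mul_le_iff₀ two_pos]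
    exact hcontr g
  have hdist := dist_inner_thetaAlpha_le θ hα1 hθα f hx
  have : Nonempty X := by
    by_contra! hX
    have h := hdist (⟪x, thetaAlpha θ α f x⟫_ℂ + 1)
    rw [dist_self_add_right, norm_one, Subsingleton.elim (f - _) 0, norm_zero] at h
    exact zero_lt_one.not_ge h
  have hK : IsCompact (Set.range (f : C(X, ℂ))) := isCompact_range (map_continuous _)
  refine convexHull_mono (A.range_subset_spectrum f) <|
    closedConvexHull_min (subset_convexHull ℝ _) (convex_convexHull ℝ _)
      (isCompact_convexHull hK).isClosed <|
    mem_closedConvexHull_of_forall_exists_dist_le hK.isBounded fun l => ?_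
  obtain ⟨p, hp⟩ := ((f : C(X, ℂ)) - algebraMap ℂ C(X, ℂ) l).exists_norm_le_norm_apply
  refine ⟨(f : C(X, ℂ)) p, ⟨p, rfl⟩, (hdist l).trans ?_⟩
  rw [dist_eq_norm]
  exact hp

/-- Lemma: under the hypotheses of the projection theorem (uniform algebra `A`,
continuous unital homomorphism `θ : A → Mₙ(ℂ)`, unital antilinear contraction
`α` with `θ_α = (θ(·) + θ(α(·))*)/2` a contraction), the numerical range of
`θ_α(f)` is contained in the convex hull of the spectrum of `f`. -/
theorem stmt_7 {X : Type*} [TopologicalSpace X] [CompactSpace X] [T2Space X]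
    (A : Subalgebra ℂ C(X, ℂ)) (hA : IsClosed (A : Set C(X, ℂ)))
    {n : ℕ}
    (θ : ↥A →ₐ[ℂ] (EuclideanSpace ℂ (Fin n) →L[ℂ] EuclideanSpace ℂ (Fin n)))
    (hθ : Continuous θ)
    (α : ↥A →ₛₗ[starRingEnd ℂ] ↥A) (hα1 : α 1 = 1) (hα : ∀ f, ‖α f‖ ≤ ‖f‖)
    (hcontr : ∀ f : A, ‖θ f + star (θ (α f))‖ ≤ 2 * ‖f‖) :
    ∀ f : A, ∀ x : EuclideanSpace ℂ (Fin n), ‖x‖ = 1 →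
      ⟪x, ((2 : ℂ)⁻¹ • (θ f + star (θ (α f)))) x⟫_ℂ
        ∈ convexHull ℝ (spectrum ℂ f) :=
  stmt_7_general A θ α hα1 hcontr
end

section
/- Let A be a uniform algebra, θ : A → Mₙ(ℂ) a continuous unital homomorphism, and α : A → A a unital antilinear contraction such that ‖θ(f) + θ(α(f))*‖ ≤ 2‖f‖ for all f. If p ∈ A satisfies p² = p and p is real-valued (self-adjoint as an element of C(X)), then θ(p) is a self-adjoint idempotent (orthogonal projection) in Mₙ(ℂ). -/
open scoped InnerProductSpace ComplexConjugate

namespace Stmt11Aux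

lemma scalar_lemma (c : ℝ) (hc : 0 ≤ c) (w : ℂ)
    (h : ∀ z : ℂ, ‖z‖ = 1 → ‖(c:ℂ) + (z - 1) * w‖ ≤ c) :
    w.im = 0 ∧ 0 ≤ w.re ∧ w.re ≤ c := by
  have key : ‖(c:ℂ) - w‖ + ‖w‖ ≤ c := by
    by_cases hw : w = 0
    · simpa [hw] using h 1 (by simp)
    by_cases hb : (c:ℂ) - w = 0
    · have h1 := h 1 (by simp)
      have : w = (c:ℂ) := by linear_combination -hb
      simp [hb, this, Complex.norm_real, abs_of_nonneg hc]
    · set b : ℂ := (c:ℂ) - w with hbdef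
      set s : ℝ := ‖b‖ with hsdef
      set r : ℝ := ‖w‖ with hrdef
      have hspos : 0 < s := norm_pos_iff.mpr hb
      have hrpos : 0 < r := norm_pos_iff.mpr hw
      set z : ℂ := ((r : ℂ) * b) / ((s : ℂ) * w) with hzdef
      have hz : ‖z‖ = 1 := by
        rw [hzdef, norm_div, norm_mul, norm_mul]
        simp only [Complex.norm_real, abs_norm, ← hsdef, ← hrdef, abs_of_pos hspos,
          abs_of_pos hrpos]
        field_simp
        rw [Real.norm_of_nonneg hrpos.le, Real.norm_of_nonneg hspos.le, mul_div_cancel_right₀ _ hspos.ne']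
      have hzw : z * w = (r:ℂ) * b / (s:ℂ) := by
        rw [hzdef, div_mul_eq_mul_div]
        exact mul_div_mul_right _ _ hw
      have e : (c:ℂ) + (z - 1) * w = (((s + r)/s : ℝ) : ℂ) * b := by
        have e2 : (c:ℂ) + (z - 1) * w = b + z * w := by rw [hbdef]; ring
        rw [e2, hzw]
        have hsne : (s:ℂ) ≠ 0 := by simpa using ne_of_gt hspos
        push_cast
        field_simp
      have h3 := h z hz
      rw [e, norm_mul, Complex.norm_real, Real.norm_eq_abs,
        abs_of_nonneg (by positivity : (0:ℝ) ≤ (s + r)/s), ← hsdef] at h3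
      have h4 : (s + r)/s * s = s + r := div_mul_cancel₀ _ (ne_of_gt hspos)
      rw [h4] at h3
      exact h3
  have hsum : ‖(c:ℂ) - w‖ + ‖w‖ = c := by
    refine le_antisymm key ?_
    calc c = ‖((c:ℂ) - w) + w‖ := by
              simp [Complex.norm_real, abs_of_nonneg hc]
      _ ≤ ‖(c:ℂ) - w‖ + ‖w‖ := norm_add_le _ _
  have h1 : ‖w‖^2 = w.re^2 + w.im^2 := by
    rw [Complex.sq_norm, Complex.normSq_apply]; ring
  have h2 : ‖(c:ℂ) - w‖^2 = (c - w.re)^2 + w.im^2 := by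
    rw [Complex.sq_norm, Complex.normSq_apply]
    simp only [Complex.sub_re, Complex.sub_im, Complex.ofReal_re, Complex.ofReal_im]
    ring
  have hr0 : 0 ≤ ‖w‖ := norm_nonneg _
  have hs0 : 0 ≤ ‖(c:ℂ) - w‖ := norm_nonneg _
  rcases eq_or_lt_of_le hc with hc0 | hcpos
  · have : ‖w‖ = 0 := by linarith
    have hw : w = 0 := norm_eq_zero.mp this
    simp [hw, ← hc0]
  · have hre : w.re = ‖w‖ := by nlinarith [h1, h2, hsum]
    have him : w.im ^ 2 = 0 := by nlinarith [h1]
    refine ⟨(pow_eq_zero_iff (two_ne_zero)).mp him, by rw [hre]; exact hr0, by linarith⟩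


variable {n : ℕ}

local notation "H" => EuclideanSpace ℂ (Fin n)

lemma adj_symm (R : H →L[ℂ] H) (hsa : star R = R) (a b : H) :
    ⟪R a, b⟫_ℂ = ⟪a, R b⟫_ℂ := by
  have hadj : ContinuousLinearMap.adjoint R = R := by
    rw [← ContinuousLinearMap.star_eq_adjoint, hsa]
  conv_lhs => rw [← hadj]
  exact ContinuousLinearMap.adjoint_inner_left R b a

lemma cauchy_schwarz (R : H →L[ℂ] H) (hsa : star R = R)
    (hpos : ∀ x, 0 ≤ (⟪x, R x⟫_ℂ).re) (u v : H) :
    ‖⟪u, R v⟫_ℂ‖^2 ≤ (⟪u, R u⟫_ℂ).re * (⟪v, R v⟫_ℂ).re := by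
  set B := ⟪u, R v⟫_ℂ with hB
  set a := (⟪u, R u⟫_ℂ).re with ha
  set b := (⟪v, R v⟫_ℂ).re with hb
  have ha0 : 0 ≤ a := hpos u
  have hb0 : 0 ≤ b := hpos v
  have hnB : ‖B‖^2 = Complex.normSq B := by
    rw [Complex.sq_norm]
  have key : ∀ t : ℝ, 0 ≤ a - 2 * t * Complex.normSq B + t^2 * Complex.normSq B * b := by
    intro t
    set c : ℂ := -(t : ℂ) * conj B with hc
    have expand : ⟪u + c • v, R (u + c • v)⟫_ℂ
        = ⟪u, R u⟫_ℂ + c * B + conj c * conj B + conj c * c * ⟪v, R v⟫_ℂ := by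
      rw [map_add, map_smul]
      rw [inner_add_left, inner_add_right, inner_add_right, inner_smul_left,
        inner_smul_right, inner_smul_left, inner_smul_right]
      have hvRu : ⟪v, R u⟫_ℂ = conj B := by
        rw [hB, ← inner_conj_symm, adj_symm R hsa]
      rw [hvRu, ← hB]
      ring
    have h0 := hpos (u + c • v)
    rw [expand] at h0
    simp only [Complex.add_re] at h0
    have e1 : (c * B).re = -t * Complex.normSq B := by
      simp [hc, Complex.mul_re, Complex.conj_re, Complex.conj_im, Complex.normSq_apply]
      ring
    have e2 : (conj c * conj B).re = -t * Complex.normSq B := by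
      rw [← map_mul, Complex.conj_re, e1]
    have e3 : (conj c * c * ⟪v, R v⟫_ℂ).re = t^2 * Complex.normSq B * b := by
      have h7 : Complex.normSq c = t^2 * Complex.normSq B := by
        rw [hc, Complex.normSq_mul, Complex.normSq_conj, Complex.normSq_neg,
          Complex.normSq_ofReal]
        ring
      have h8 : conj c * c = ((t^2 * Complex.normSq B : ℝ) : ℂ) := by
        rw [mul_comm, Complex.mul_conj, h7]
      rw [h8, Complex.re_ofReal_mul, hb]
    rw [e1, e2, e3] at h0
    linarith
  by_cases hbz : b = 0
  · have hB0 : B = 0 := by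
      by_contra hBne
      have hnBpos : 0 < Complex.normSq B := Complex.normSq_pos.mpr hBne
      have k := key ((a + 1) / (2 * Complex.normSq B))
      rw [hbz] at k
      have e4 : 2 * ((a + 1) / (2 * Complex.normSq B)) * Complex.normSq B = a + 1 := by
        field_simp [ne_of_gt hnBpos]
      rw [mul_zero] at k
      rw [e4] at k
      linarith
    simp only [hB0]
    simpa using mul_nonneg ha0 hb0
  · have hbpos : 0 < b := lt_of_le_of_ne hb0 (Ne.symm hbz)
    have k := key (1 / b)
    have e5 : (1/b)^2 * Complex.normSq B * b = Complex.normSq B * (1/b) := by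
      field_simp [hbz]
    have e6 : 2 * (1/b) * Complex.normSq B = 2 * Complex.normSq B * (1/b) := by ring
    rw [e5, e6] at k
    rw [hnB]
    have : Complex.normSq B * (1/b) ≤ a := by linarith
    calc Complex.normSq B = Complex.normSq B * (1/b) * b := by field_simp [hbz]
      _ ≤ a * b := by
          apply mul_le_mul_of_nonneg_right this (le_of_lt hbpos)

end Stmt11Aux

namespace Tr

variable {n : ℕ}

noncomputable def e (n : ℕ) (i : Fin n) : EuclideanSpace ℂ (Fin n) :=
  EuclideanSpace.single i 1

lemma inner_e_left (i : Fin n) (y : EuclideanSpace ℂ (Fin n)) : ⟪e n i, y⟫_ℂ = y i := by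
  simp [e, EuclideanSpace.inner_single_left]

lemma decomp (x : EuclideanSpace ℂ (Fin n)) : ∑ i, x i • e n i = x := by
  ext j
  rw [WithLp.ofLp_sum, Finset.sum_apply]
  simp only [PiLp.smul_apply, e, EuclideanSpace.single_apply, smul_eq_mul]
  rw [Finset.sum_eq_single j]
  · simp
  · intro i _ hij
    simp [Ne.symm hij]
  · intro hj
    exact absurd (Finset.mem_univ j) hj

lemma expand (M : EuclideanSpace ℂ (Fin n) →L[ℂ] EuclideanSpace ℂ (Fin n))
    (x : EuclideanSpace ℂ (Fin n)) : M x = ∑ i, x i • M (e n i) := by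
  conv_lhs => rw [← decomp x]
  rw [map_sum]
  simp only [map_smul]

lemma apply_coord (M : EuclideanSpace ℂ (Fin n) →L[ℂ] EuclideanSpace ℂ (Fin n))
    (x : EuclideanSpace ℂ (Fin n)) (i : Fin n) :
    (M x) i = ∑ j, x j * (M (e n j)) i := by
  conv_lhs => rw [expand M x]
  rw [WithLp.ofLp_sum, Finset.sum_apply]
  simp only [PiLp.smul_apply, smul_eq_mul]

noncomputable def trc (M : EuclideanSpace ℂ (Fin n) →L[ℂ] EuclideanSpace ℂ (Fin n)) : ℂ :=
  ∑ i, ⟪e n i, M (e n i)⟫_ℂ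

lemma trc_apply (M : EuclideanSpace ℂ (Fin n) →L[ℂ] EuclideanSpace ℂ (Fin n)) :
    trc M = ∑ i, (M (e n i)) i := by
  rw [trc]
  exact Finset.sum_congr rfl fun i _ => inner_e_left i _

lemma re_inner_self (y : EuclideanSpace ℂ (Fin n)) : (⟪y, y⟫_ℂ).re = ‖y‖^2 := by
  rw [inner_self_eq_norm_sq_to_K]
  simp [← Complex.ofReal_pow]

lemma trc_mul_comm (A B : EuclideanSpace ℂ (Fin n) →L[ℂ] EuclideanSpace ℂ (Fin n)) :
    trc (A * B) = trc (B * A) := by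
  have h : ∀ (A B : EuclideanSpace ℂ (Fin n) →L[ℂ] EuclideanSpace ℂ (Fin n)),
      trc (A * B) = ∑ i, ∑ j, (B (e n i)) j * (A (e n j)) i := by
    intro A B
    rw [trc_apply]
    refine Finset.sum_congr rfl fun i _ => ?_
    rw [ContinuousLinearMap.mul_apply]
    exact apply_coord A _ i
  rw [h A B, h B A, Finset.sum_comm]
  refine Finset.sum_congr rfl fun i _ => Finset.sum_congr rfl fun j _ => mul_comm _ _

lemma trc_add (A B : EuclideanSpace ℂ (Fin n) →L[ℂ] EuclideanSpace ℂ (Fin n)) :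
    trc (A + B) = trc A + trc B := by
  simp [trc, inner_add_right, Finset.sum_add_distrib]

lemma trc_sub (A B : EuclideanSpace ℂ (Fin n) →L[ℂ] EuclideanSpace ℂ (Fin n)) :
    trc (A - B) = trc A - trc B := by
  simp [trc, inner_sub_right, Finset.sum_sub_distrib]

lemma retrc_nonneg (M : EuclideanSpace ℂ (Fin n) →L[ℂ] EuclideanSpace ℂ (Fin n))
    (h : ∀ x, 0 ≤ (⟪x, M x⟫_ℂ).re) : 0 ≤ (trc M).re := by
  rw [trc, Complex.re_sum]
  exact Finset.sum_nonneg fun i _ => h _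

lemma eq_zero_of_trc (M : EuclideanSpace ℂ (Fin n) →L[ℂ] EuclideanSpace ℂ (Fin n))
    (h : (trc (star M * M)).re ≤ 0) : M = 0 := by
  have h1 : trc (star M * M) = ∑ i, (⟪M (e n i), M (e n i)⟫_ℂ) := by
    rw [trc]
    refine Finset.sum_congr rfl fun i _ => ?_
    rw [ContinuousLinearMap.mul_apply, ContinuousLinearMap.star_eq_adjoint,
      ContinuousLinearMap.adjoint_inner_right]
  rw [h1, Complex.re_sum] at h
  have h3 : ∀ i, M (e n i) = 0 := by
    intro i
    have h2 : (⟪M (e n i), M (e n i)⟫_ℂ).re = 0 := by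
      have hge : ∀ j ∈ Finset.univ, (0:ℝ) ≤ (⟪M (e n j), M (e n j)⟫_ℂ).re := by
        intro j _
        rw [re_inner_self]
        positivity
      have h4 := Finset.sum_le_sum_of_subset_of_nonneg
        (Finset.singleton_subset_iff.mpr (Finset.mem_univ i)) (fun j hj _ => hge j hj)
      rw [Finset.sum_singleton] at h4
      have hge2 := hge i (Finset.mem_univ i)
      linarith
    rw [re_inner_self] at h2
    rw [← norm_eq_zero]
    exact pow_eq_zero_iff two_ne_zero |>.mp h2
  have h5 : ∀ x, M x = 0 := by
    intro x
    rw [expand M x]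
    simp [h3]
  exact ContinuousLinearMap.ext fun x => by simpa using h5 x

end Tr

open Stmt11Aux Tr
open scoped InnerProductSpace ComplexConjugate

set_option maxHeartbeats 1000000
set_option synthInstance.maxHeartbeats 400000

/-- Theorem: let `A` be a uniform algebra, `θ : A → Mₙ(ℂ)` a continuous unital
homomorphism, `α : A → A` a unital antilinear contraction with
`‖θ(f) + θ(α(f))*‖ ≤ 2‖f‖` for all `f`. If `p ∈ A` is a real-valued idempotent
(a self-adjoint projection in `C(X)`), then `θ(p)` is a self-adjoint
idempotent in `Mₙ(ℂ)`. -/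
theorem stmt_11 {X : Type*} [TopologicalSpace X] [CompactSpace X] [T2Space X]
    (A : Subalgebra ℂ C(X, ℂ)) (hA : IsClosed (A : Set C(X, ℂ)))
    {n : ℕ}
    (θ : ↥A →ₐ[ℂ] (EuclideanSpace ℂ (Fin n) →L[ℂ] EuclideanSpace ℂ (Fin n)))
    (hθ : Continuous θ)
    (α : ↥A →ₛₗ[starRingEnd ℂ] ↥A) (hα1 : α 1 = 1) (hα : ∀ f, ‖α f‖ ≤ ‖f‖)
    (hcontr : ∀ f : A, ‖θ f + star (θ (α f))‖ ≤ 2 * ‖f‖)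
    (p : A) (hpsa : star (p : C(X, ℂ)) = (p : C(X, ℂ))) (hp2 : p * p = p) :
    θ p * θ p = θ p ∧ star (θ p) = θ p := by
  classical
  have hT2 : θ p * θ p = θ p := by rw [← map_mul, hp2]
  refine ⟨hT2, ?_⟩
  set T : EuclideanSpace ℂ (Fin n) →L[ℂ] EuclideanSpace ℂ (Fin n) := θ p with hTdef
  set C : EuclideanSpace ℂ (Fin n) →L[ℂ] EuclideanSpace ℂ (Fin n) := θ (α p) with hCdef
  set R : EuclideanSpace ℂ (Fin n) →L[ℂ] EuclideanSpace ℂ (Fin n) := T + star C with hRdef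
  -- p is {0,1}-valued
  have hp01 : ∀ x : X, (p : C(X, ℂ)) x = 0 ∨ (p : C(X, ℂ)) x = 1 := by
    intro x
    have : ((p * p : A) : C(X, ℂ)) x = ((p : A) : C(X, ℂ)) x := by rw [hp2]
    have h2 : ((p : A) : C(X, ℂ)) x * ((p : A) : C(X, ℂ)) x = ((p : A) : C(X, ℂ)) x := by
      simpa using this
    have h3 : ((p : A) : C(X, ℂ)) x * (((p : A) : C(X, ℂ)) x - 1) = 0 := by
      linear_combination h2
    rcases mul_eq_zero.mp h3 with h | h
    · exact Or.inl h
    · exact Or.inr (by linear_combination h)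
  -- the basic norm estimate
  have hbig : ∀ z : ℂ, ‖z‖ = 1 →
      ‖(1 + 1 : EuclideanSpace ℂ (Fin n) →L[ℂ] EuclideanSpace ℂ (Fin n)) + (z - 1) • R‖ ≤ 2 := by
    intro z hz
    set u : A := 1 + (z - 1) • p with hu
    have hunorm : ‖u‖ ≤ 1 := by
      have hcoe : ((u : A) : C(X, ℂ)) = 1 + (z - 1) • ((p : A) : C(X, ℂ)) := by
        push_cast
        rfl
      show ‖((u : A) : C(X, ℂ))‖ ≤ 1
      rw [hcoe]
      refine ContinuousMap.norm_le _ zero_le_one |>.mpr fun x => ?_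
      have happ : (1 + (z - 1) • ((p : A) : C(X, ℂ))) x
          = 1 + (z - 1) * ((p : A) : C(X, ℂ)) x := by
        simp
      rw [happ]
      rcases hp01 x with h | h
      · simp [h]
      · simp [h, hz]
    have h1 := hcontr u
    have hθu : θ u = 1 + (z - 1) • T := by rw [hu, map_add, map_one, map_smul]
    have hαu : α u = 1 + (starRingEnd ℂ (z - 1)) • (α p) := by
      rw [hu, map_add, hα1, LinearMap.map_smulₛₗ]
    have hθαu : θ (α u) = 1 + (starRingEnd ℂ (z - 1)) • C := by
      rw [hαu, map_add, map_one, map_smul]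
    have hstar : star (θ (α u)) = 1 + (z - 1) • star C := by
      erw [hθαu, star_add, star_one, star_smul]
      congr 1
      rw [Complex.star_def, Complex.conj_conj]
    have hsum : θ u + star (θ (α u)) = (1 + 1) + (z - 1) • R := by
      rw [hθu, hstar, hRdef, smul_add]
      abel
    calc ‖(1 + 1 : EuclideanSpace ℂ (Fin n) →L[ℂ] EuclideanSpace ℂ (Fin n)) + (z - 1) • R‖
        = ‖θ u + star (θ (α u))‖ := by rw [hsum]
      _ ≤ 2 * ‖u‖ := h1
      _ ≤ 2 := by linarith
  -- numerical range facts
  have hnum : ∀ x : EuclideanSpace ℂ (Fin n),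
      (⟪x, R x⟫_ℂ).im = 0 ∧ 0 ≤ (⟪x, R x⟫_ℂ).re ∧ (⟪x, R x⟫_ℂ).re ≤ 2 * ‖x‖ ^ 2 := by
    intro x
    apply scalar_lemma (2 * ‖x‖ ^ 2) (by positivity)
    intro z hz
    set M := (1 + 1 : EuclideanSpace ℂ (Fin n) →L[ℂ] EuclideanSpace ℂ (Fin n)) + (z - 1) • R
      with hM
    have h3 : ⟪x, M x⟫_ℂ = ((2 * ‖x‖ ^ 2 : ℝ) : ℂ) + (z - 1) * ⟪x, R x⟫_ℂ := by
      rw [hM]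
      rw [ContinuousLinearMap.add_apply, inner_add_right, ContinuousLinearMap.smul_apply,
        inner_smul_right, ContinuousLinearMap.add_apply, ContinuousLinearMap.one_apply,
        inner_add_right, inner_self_eq_norm_sq_to_K]
      push_cast
      ring_nf
      rw [RCLike.ofReal_eq_complex_ofReal]
      ring
    rw [← h3]
    calc ‖⟪x, M x⟫_ℂ‖ ≤ ‖x‖ * ‖M x‖ := norm_inner_le_norm _ _
      _ ≤ ‖x‖ * (‖M‖ * ‖x‖) := by
          have := M.le_opNorm x
          have hx0 : (0:ℝ) ≤ ‖x‖ := norm_nonneg _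
          nlinarith
      _ ≤ 2 * ‖x‖ ^ 2 := by
          have := hbig z hz
          have hx0 : (0:ℝ) ≤ ‖x‖ := norm_nonneg _
          nlinarith
  have hRpos : ∀ x, 0 ≤ (⟪x, R x⟫_ℂ).re := fun x => (hnum x).2.1
  have hRle : ∀ x, (⟪x, R x⟫_ℂ).re ≤ 2 * ‖x‖ ^ 2 := fun x => (hnum x).2.2
  have hRsa : star R = R := by
    have hsym : (R : EuclideanSpace ℂ (Fin n) →ₗ[ℂ] EuclideanSpace ℂ (Fin n)).IsSymmetric := by
      rw [LinearMap.isSymmetric_iff_inner_map_self_real]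
      intro v
      have h1 : (⟪R v, v⟫_ℂ) = conj (⟪v, R v⟫_ℂ) := (inner_conj_symm _ _).symm
      have h2 := (hnum v).1
      rw [ContinuousLinearMap.coe_coe, h1]
      rw [Complex.conj_conj]
      exact ((Complex.conj_eq_iff_im).mpr h2).symm
    exact ContinuousLinearMap.isSelfAdjoint_iff_isSymmetric.mpr hsym
  -- the range projection
  set K : Submodule ℂ (EuclideanSpace ℂ (Fin n)) :=
    LinearMap.range (T : EuclideanSpace ℂ (Fin n) →ₗ[ℂ] EuclideanSpace ℂ (Fin n)) with hK
  set P : EuclideanSpace ℂ (Fin n) →L[ℂ] EuclideanSpace ℂ (Fin n) :=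
    K.subtypeL ∘L K.orthogonalProjectionOnto with hPdef
  have hPsa : star P = P := isSelfAdjoint_starProjection K
  have hPmem : ∀ x, P x ∈ K := fun x => (K.orthogonalProjectionOnto x).2
  have hPfix : ∀ x, x ∈ K → P x = x := fun x hx => Submodule.starProjection_eq_self_iff.mpr hx
  have hTfix : ∀ x, x ∈ K → T x = x := by
    rintro x ⟨y, rfl⟩
    show T (T y) = T y
    rw [← ContinuousLinearMap.mul_apply, hT2]
  have hPT : P * T = T := ContinuousLinearMap.ext fun x => hPfix _ ⟨x, rfl⟩
  have hTP : T * P = P := ContinuousLinearMap.ext fun x => hTfix _ (hPmem x)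
  have hP2 : P * P = P := ContinuousLinearMap.ext fun x => hPfix _ (hPmem x)
  have hPTstar : P * star T = P := by
    have h := congrArg star hTP
    rwa [star_mul, hPsa] at h
  have hTstarP : star T * P = star T := by
    have h := congrArg star hPT
    rwa [star_mul, hPsa] at h
  have hCT : C * T = T * C := by rw [hTdef, hCdef, ← map_mul, ← map_mul, mul_comm]
  have hCK : ∀ x, x ∈ K → C x ∈ K := by
    rintro x ⟨y, rfl⟩
    refine ⟨C y, ?_⟩
    show T (C y) = C (T y)
    rw [← ContinuousLinearMap.mul_apply, ← ContinuousLinearMap.mul_apply, hCT]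
  have hPCP : P * C * P = C * P := by
    refine ContinuousLinearMap.ext fun x => ?_
    show P (C (P x)) = C (P x)
    exact hPfix _ (hCK _ (hPmem x))
  clear_value R P C T
  obtain ⟨E, hEdef⟩ : ∃ E, E = (1 : EuclideanSpace ℂ (Fin n) →L[ℂ] EuclideanSpace ℂ (Fin n)) - P :=
    ⟨_, rfl⟩
  obtain ⟨Y, hYdef⟩ : ∃ Y, Y = T - P := ⟨_, rfl⟩
  have hEsa : star E = E := by
    rw [hEdef]; erw [star_sub]; rw [hPsa]; erw [star_one]
  have hYP : Y * P = 0 := by rw [hYdef, sub_mul, hTP, hP2, sub_self]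
  have hPY : P * Y = Y := by rw [hYdef, mul_sub, hPT, hP2]
  have hYE : Y * E = Y := by rw [hEdef, mul_sub, mul_one, hYP, sub_zero]
  have hPE : P * E = 0 := by rw [hEdef, mul_sub, mul_one, hP2, sub_self]
  have hYstarP : star Y * P = star Y := by
    have h := congrArg star hPY; rwa [star_mul, hPsa] at h
  have hPYstar : P * star Y = 0 := by
    have h := congrArg star hYP; erw [star_mul, hPsa, star_zero] at h; exact h
  have hEYstar : E * star Y = star Y := by rw [hEdef, sub_mul, one_mul, hPYstar, sub_zero]
  have hYsYE : star Y * Y * E = star Y * Y := by rw [mul_assoc, hYE]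
  have hEYsY : E * (star Y * Y) = star Y * Y := by rw [← mul_assoc, hEYstar]
  have hYsYP : Y * star Y * P = Y * star Y := by rw [mul_assoc, hYstarP]
  have hPYsY : P * (Y * star Y) = Y * star Y := by rw [← mul_assoc, hPY]
  have hPstarCP : P * (star C * P) = P * star C := by
    have h := congrArg star hPCP
    rw [star_mul, star_mul, star_mul, hPsa] at h
    rw [← mul_assoc] at h ⊢
    exact h
  have hCeq : C = R - star T := by
    have h : star R = star T + C := by rw [hRdef]; erw [star_add]; rw [star_star]
    rw [hRsa] at h
    exact eq_sub_of_add_eq' h.symm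
  have hPRE : P * R * E = Y := by
    rw [hRdef, mul_add, add_mul]
    have h1 : P * T * E = Y := by rw [hPT, hEdef, mul_sub, mul_one, hTP, ← hYdef]
    have h2 : P * star C * E = 0 := by
      rw [← hPstarCP, mul_assoc, mul_assoc, hPE, mul_zero, mul_zero]
    rw [h1, h2, add_zero]
  have hERP : E * R * P = star Y := by
    have h := congrArg star hPRE
    rwa [star_mul, star_mul, hRsa, hEsa, hPsa, ← mul_assoc] at h
  have hPCE : P * C * E = Y := by
    rw [hCeq, mul_sub, sub_mul, hPTstar, hPRE, hPE, sub_zero]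
  have hsub : P * C - C * P = Y := by
    have h1 : P * C * E = P * C - P * C * P := by
      rw [hEdef, mul_sub, mul_one]
    rw [← hPCP, ← h1, hPCE]
  have hKey : C * Y - Y * C = Y := by
    have h1 : C * Y - Y * C = (C * T - T * C) + (P * C - C * P) := by
      rw [hYdef, mul_sub, sub_mul]; abel
    rw [h1, hCT, sub_self, hsub, zero_add]
  have hPCPR : P * C * P = P * R * P - P := by
    rw [hCeq, mul_sub, sub_mul, mul_assoc P (star T) P, hTstarP, hPTstar]
  have hECE : E * C * E = E * R * E := by
    have h1 : E * star T = star T - P := by rw [hEdef, sub_mul, one_mul, hPTstar]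
    have h2 : E * star T * E = 0 := by
      rw [h1, sub_mul, hPE, sub_zero, hEdef, mul_sub, mul_one, hTstarP, sub_self]
    rw [hCeq, mul_sub, sub_mul, h2, sub_zero]
  -- positivity transfer
  have hconj_pos : ∀ (Z N : EuclideanSpace ℂ (Fin n) →L[ℂ] EuclideanSpace ℂ (Fin n)),
      (∀ x, 0 ≤ (⟪x, N x⟫_ℂ).re) → ∀ x, 0 ≤ (⟪x, (star Z * N * Z) x⟫_ℂ).re := by
    intro Z N hN x
    have h1 : (star Z * N * Z) x = star Z (N (Z x)) := rfl
    rw [h1, ContinuousLinearMap.star_eq_adjoint, ContinuousLinearMap.adjoint_inner_right]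
    exact hN _
  -- pointwise consequences
  have hP2' : ∀ v, P (P v) = P v := fun v => by
    rw [← ContinuousLinearMap.mul_apply, hP2]
  have hPinner : ∀ a b, ⟪a, P b⟫_ℂ = ⟪P a, b⟫_ℂ := fun a b => (adj_symm P hPsa a b).symm
  have hEinner : ∀ a b, ⟪a, E b⟫_ℂ = ⟪E a, b⟫_ℂ := fun a b => (adj_symm E hEsa a b).symm
  have hPosERE : ∀ x, 0 ≤ (⟪x, (E * R * E) x⟫_ℂ).re := by
    intro x
    have h := hconj_pos E R hRpos x
    rwa [hEsa] at h
  have hPosG : ∀ x, 0 ≤ (⟪x, ((P + P - P * R * P)) x⟫_ℂ).re := by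
    intro x
    have h1 : ((P + P - P * R * P)) x = P x + P x - P (R (P x)) := rfl
    rw [h1, inner_sub_right, inner_add_right]
    have h2 : ⟪x, P x⟫_ℂ = ⟪P x, P x⟫_ℂ := by
      conv_lhs => rw [← hP2' x]
      rw [hPinner]
    have h3 : ⟪x, P (R (P x))⟫_ℂ = ⟪P x, R (P x)⟫_ℂ := hPinner x _
    rw [h2, h3]
    simp only [Complex.sub_re, Complex.add_re]
    have h4 := hRle (P x)
    have h5 : (⟪P x, P x⟫_ℂ).re = ‖P x‖^2 := re_inner_self _
    rw [h5]
    linarith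
  -- trace identities
  have c1 : trc (star Y * Y) = trc (star Y * C * Y) - trc (star Y * Y * C) := by
    have o2 : star Y * (C * Y - Y * C) = star Y * C * Y - star Y * Y * C := by
      rw [mul_sub, ← mul_assoc, ← mul_assoc]
    have o3 : star Y * Y = star Y * C * Y - star Y * Y * C := by
      rw [← o2, hKey]
    have c1' := congrArg trc o3
    rwa [trc_sub] at c1'
  have c2 : trc (star Y * C * Y) = trc (Y * star Y * (P * R * P)) - trc (Y * star Y) := by
    calc trc (star Y * C * Y)
        = trc (Y * (star Y * C)) := trc_mul_comm _ _
      _ = trc (Y * star Y * C) := by rw [← mul_assoc]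
      _ = trc (P * (Y * star Y * C)) := by rw [← mul_assoc, hPYsY]
      _ = trc ((Y * star Y * C) * P) := trc_mul_comm _ _
      _ = trc (Y * star Y * (C * P)) := by rw [mul_assoc (Y * star Y) C P]
      _ = trc (Y * star Y * (P * C * P)) := by rw [hPCP]
      _ = trc (Y * star Y * (P * R * P) - Y * star Y * P) := by rw [hPCPR, mul_sub]
      _ = trc (Y * star Y * (P * R * P)) - trc (Y * star Y) := by rw [trc_sub, hYsYP]
  have c3 : trc (star Y * Y * C) = trc (star Y * Y * (E * R * E)) := by
    calc trc (star Y * Y * C)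
        = trc (E * (star Y * Y) * C) := by rw [hEYsY]
      _ = trc (E * ((star Y * Y) * C)) := by rw [mul_assoc]
      _ = trc (((star Y * Y) * C) * E) := trc_mul_comm _ _
      _ = trc ((star Y * Y) * (C * E)) := by rw [mul_assoc (star Y * Y) C E]
      _ = trc ((star Y * Y * E) * (C * E)) := by rw [hYsYE]
      _ = trc ((star Y * Y) * (E * (C * E))) := by rw [mul_assoc (star Y * Y) E (C * E)]
      _ = trc ((star Y * Y) * (E * C * E)) := by rw [mul_assoc E C E]
      _ = trc ((star Y * Y) * (E * R * E)) := by rw [hECE]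
  have r1 : (trc (Y * star Y * (P * R * P))).re ≤ 2 * (trc (Y * star Y)).re := by
    have hpos := retrc_nonneg _ (hconj_pos Y (P + P - P * R * P) hPosG)
    have e1 : trc (star Y * (P + P - P * R * P) * Y)
        = trc (Y * star Y) + trc (Y * star Y) - trc (Y * star Y * (P * R * P)) := by
      calc trc (star Y * (P + P - P * R * P) * Y)
          = trc (Y * (star Y * (P + P - P * R * P))) := trc_mul_comm _ _
        _ = trc (Y * star Y * P + Y * star Y * P - Y * star Y * (P * R * P)) := by
            congr 1
            rw [← mul_assoc, mul_sub, mul_add]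
        _ = trc (Y * star Y * P) + trc (Y * star Y * P) - trc (Y * star Y * (P * R * P)) := by
            rw [trc_sub, trc_add]
        _ = trc (Y * star Y) + trc (Y * star Y) - trc (Y * star Y * (P * R * P)) := by
            rw [hYsYP]
    rw [e1] at hpos
    simp only [Complex.sub_re, Complex.add_re] at hpos
    linarith
  have r2 : 0 ≤ (trc (star Y * Y * (E * R * E))).re := by
    have hpos := retrc_nonneg _ (hconj_pos (star Y) (E * R * E) hPosERE)
    rw [star_star] at hpos
    have e1 : trc (Y * (E * R * E) * star Y) = trc (star Y * Y * (E * R * E)) := by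
      rw [trc_mul_comm (Y * (E * R * E)) (star Y), ← mul_assoc]
    rwa [e1] at hpos
  have hswap : trc (Y * star Y) = trc (star Y * Y) := trc_mul_comm _ _
  have hzero : (trc (star Y * Y * (E * R * E))).re = 0 := by
    have hc1 := congrArg Complex.re c1
    have hc2 := congrArg Complex.re c2
    have hc3 := congrArg Complex.re c3
    have hcs := congrArg Complex.re hswap
    simp only [Complex.sub_re] at hc1 hc2
    rw [hc3] at hc1
    linarith
  -- the Cauchy-Schwarz step
  have hYx : ∀ x, Y x = P (R (E x)) := by
    intro x
    rw [← hPRE]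
    rfl
  have hCSbound : ∀ x, ‖Y x‖^2 ≤ 2 * (⟪E x, R (E x)⟫_ℂ).re := by
    intro x
    set w := E x with hw
    set u := Y x with hu
    have hu2 : u = P (R w) := hYx x
    have h1 : (⟪u, u⟫_ℂ).re = (⟪u, R w⟫_ℂ).re := by
      conv_lhs => rw [hu2]
      rw [adj_symm P hPsa, hP2' (R w), ← hu2]
      have h2 : ⟪R w, u⟫_ℂ = conj ⟪u, R w⟫_ℂ := (inner_conj_symm _ _).symm
      rw [h2, Complex.conj_re]
    have hnu : ‖u‖^2 = (⟪u, R w⟫_ℂ).re := by rw [← h1, re_inner_self]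
    have hcs := cauchy_schwarz R hRsa hRpos u w
    have hre : (⟪u, R w⟫_ℂ).re ≤ ‖⟪u, R w⟫_ℂ‖ := by
      exact Complex.re_le_norm _
    have h3 := hRle u
    by_cases hX : ‖u‖ = 0
    · rw [hX]
      have := hRpos w
      nlinarith
    · have hXpos : 0 < ‖u‖^2 := by
        have := norm_nonneg u
        positivity
      have h4 : ‖u‖^2 * ‖u‖^2 ≤ ‖⟪u, R w⟫_ℂ‖ * ‖⟪u, R w⟫_ℂ‖ :=
        mul_self_le_mul_self (by positivity) (by rw [hnu]; exact hre)
      have h5 : ‖⟪u, R w⟫_ℂ‖^2 ≤ (2 * ‖u‖^2) * (⟪w, R w⟫_ℂ).re := by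
        calc ‖⟪u, R w⟫_ℂ‖^2 ≤ (⟪u, R u⟫_ℂ).re * (⟪w, R w⟫_ℂ).re := hcs
          _ ≤ (2 * ‖u‖^2) * (⟪w, R w⟫_ℂ).re := by
              apply mul_le_mul_of_nonneg_right h3 (hRpos w)
      have hs : ‖⟪u, R w⟫_ℂ‖ * ‖⟪u, R w⟫_ℂ‖ = ‖⟪u, R w⟫_ℂ‖^2 := (sq _).symm
      have h6 : ‖u‖^2 * ‖u‖^2 ≤ (2 * ‖u‖^2) * (⟪w, R w⟫_ℂ).re := by linarith
      have he : (2 * ‖u‖^2) * (⟪w, R w⟫_ℂ).re = ‖u‖^2 * (2 * (⟪w, R w⟫_ℂ).re) := by ring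
      rw [he] at h6
      exact (mul_le_mul_iff_right₀ hXpos).mp h6
  have hPosD : ∀ x, 0 ≤ (⟪x, ((E * R * E + E * R * E - star Y * Y)) x⟫_ℂ).re := by
    intro x
    have h1 : ((E * R * E + E * R * E - star Y * Y)) x
        = (E * R * E) x + (E * R * E) x - (star Y * Y) x := rfl
    rw [h1, inner_sub_right, inner_add_right]
    have h2 : ⟪x, (E * R * E) x⟫_ℂ = ⟪E x, R (E x)⟫_ℂ := by
      have e : (E * R * E) x = E (R (E x)) := rfl
      rw [e, hEinner]
    have h3 : ⟪x, (star Y * Y) x⟫_ℂ = ⟪Y x, Y x⟫_ℂ := by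
      have e : (star Y * Y) x = star Y (Y x) := rfl
      rw [e, ContinuousLinearMap.star_eq_adjoint, ContinuousLinearMap.adjoint_inner_right]
    rw [h2, h3]
    simp only [Complex.sub_re, Complex.add_re]
    have h4 := hCSbound x
    have h5 : (⟪Y x, Y x⟫_ℂ).re = ‖Y x‖^2 := re_inner_self _
    rw [h5]
    linarith
  have r3 : (trc (star Y * Y * (star Y * Y))).re ≤ 0 := by
    have hpos := retrc_nonneg _ (hconj_pos (star Y) (E * R * E + E * R * E - star Y * Y) hPosD)
    rw [star_star] at hpos
    have e1 : trc (Y * (E * R * E + E * R * E - star Y * Y) * star Y)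
        = trc (star Y * Y * (E * R * E)) + trc (star Y * Y * (E * R * E))
          - trc (star Y * Y * (star Y * Y)) := by
      calc trc (Y * (E * R * E + E * R * E - star Y * Y) * star Y)
          = trc (star Y * (Y * (E * R * E + E * R * E - star Y * Y))) := trc_mul_comm _ _
        _ = trc (star Y * Y * (E * R * E) + star Y * Y * (E * R * E)
              - star Y * Y * (star Y * Y)) := by
            congr 1
            rw [← mul_assoc, mul_sub, mul_add]
        _ = _ := by rw [trc_sub, trc_add]
    rw [e1] at hpos
    simp only [Complex.sub_re, Complex.add_re] at hpos
    linarith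
  have hsYY : star Y * Y = 0 := by
    apply eq_zero_of_trc
    have hst : star (star Y * Y) = star Y * Y := by rw [star_mul, star_star]
    rw [hst]
    exact r3
  have hY0 : Y = 0 := by
    refine ContinuousLinearMap.ext fun x => ?_
    have h1 : (⟪Y x, Y x⟫_ℂ).re = 0 := by
      have e : ⟪Y x, Y x⟫_ℂ = ⟪x, (star Y * Y) x⟫_ℂ := by
        have e2 : (star Y * Y) x = star Y (Y x) := rfl
        rw [e2, ContinuousLinearMap.star_eq_adjoint, ContinuousLinearMap.adjoint_inner_right]
      rw [e, hsYY]
      simp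
    rw [re_inner_self] at h1
    have h2 : ‖Y x‖ = 0 := pow_eq_zero_iff two_ne_zero |>.mp h1
    simpa using norm_eq_zero.mp h2
  have hTeqP : T = P := by
    rw [hY0] at hYdef
    exact sub_eq_zero.mp hYdef.symm
  show star T = T
  rw [hTeqP, hPsa]
end

section
/- Let D, E be real diagonal matrices and X a rectangular complex matrix satisfying 2X − DX − XE = 0, and suppose the block matrix [[(I+D)/2, X/2],[X*/2, −(I+E)/2]] has operator norm at most 1. Then X = 0. -/
/-!
If `X a b ≠ 0`, the relation `2X = DX + XE` forces `d a + e b = 2`. The columns of the block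
matrix indexed by `a` and by `b` are unit-vector images, so each has Euclidean norm at most `1`;
both contain the entry `X a b / 2`, together with `(1 + d a) / 2` resp. `-(1 + e b) / 2`.
Adding the two bounds gives `((1 + d a)² + (1 + e b)²) / 4 + ‖X a b‖² / 2 ≤ 2`, while
`(1 + d a) + (1 + e b) = 4` makes the first term at least `2`.
-/

open Matrix

namespace Matrix

theorem apply_eq_zero_of_smul_sub_diagonal_mul_sub_mul_diagonal_eq_zero
    {m n R : Type*} [Fintype m] [Fintype n] [DecidableEq m] [DecidableEq n] [Field R]
    {c : R} {d : m → R} {e : n → R} {X : Matrix m n R}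
    (h : c • X - diagonal d * X - X * diagonal e = 0) {a : m} {b : n} (hab : d a + e b ≠ c) :
    X a b = 0 := by
  have hab' : c - d a - e b ≠ 0 := fun h ↦ hab (by linear_combination -h)
  have hentry := congrFun (congrFun h a) b
  simp only [sub_apply, smul_apply, diagonal_mul, mul_diagonal, zero_apply, smul_eq_mul] at hentry
  exact (mul_eq_zero.mp (by linear_combination hentry : (c - d a - e b) * X a b = 0)).resolve_left
    hab'

variable {n 𝕜 : Type*} [RCLike 𝕜] [Fintype n] [DecidableEq n]

theorem sum_norm_sq_apply_le_opNorm_sq (A : Matrix n n 𝕜) (p : n) :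
    ∑ q, ‖A q p‖ ^ 2 ≤ ‖toEuclideanCLM (n := n) (𝕜 := 𝕜) A‖ ^ 2 := by
  set T := toEuclideanCLM (n := n) (𝕜 := 𝕜) A
  have hcol : ‖T (EuclideanSpace.single p 1)‖ ^ 2 = ∑ q, ‖A q p‖ ^ 2 := by
    simp [T, EuclideanSpace.norm_sq_eq, ofLp_toEuclideanCLM]
  rw [← hcol]
  gcongr
  simpa using T.le_opNorm (EuclideanSpace.single p 1)

theorem norm_sq_add_norm_sq_apply_le_opNorm_sq (A : Matrix n n 𝕜) {q q' : n} (hq : q ≠ q')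
    (p : n) : ‖A q p‖ ^ 2 + ‖A q' p‖ ^ 2 ≤ ‖toEuclideanCLM (n := n) (𝕜 := 𝕜) A‖ ^ 2 := by
  rw [← Finset.sum_pair (f := fun q ↦ ‖A q p‖ ^ 2) hq]
  exact (Finset.sum_le_univ_sum_of_nonneg fun _ ↦ by positivity).trans
    (sum_norm_sq_apply_le_opNorm_sq A p)

end Matrix

/-- Let `D`, `E` be real diagonal matrices and `X` a rectangular complex matrix
with `2X − DX − XE = 0`. If the self-adjoint block matrix
`[[(I+D)/2, X/2],[X*/2, −(I+E)/2]]` has operator norm at most `1`, then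
`X = 0`. -/
theorem stmt_18 {j k : ℕ} (d : Fin j → ℝ) (e : Fin k → ℝ)
    (X : Matrix (Fin j) (Fin k) ℂ)
    (hcomm : (2 : ℂ) • X - (Matrix.diagonal fun i => (d i : ℂ)) * X
        - X * (Matrix.diagonal fun i => (e i : ℂ)) = 0)
    (hnorm : ‖Matrix.toEuclideanCLM (𝕜 := ℂ)
        (Matrix.fromBlocks
          ((2 : ℂ)⁻¹ • (1 + Matrix.diagonal fun i => (d i : ℂ)))
          ((2 : ℂ)⁻¹ • X)
          ((2 : ℂ)⁻¹ • X.conjTranspose)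
          (-((2 : ℂ)⁻¹ • (1 + Matrix.diagonal fun i => (e i : ℂ)))))‖ ≤ 1) :
    X = 0 := by
  ext a b
  by_contra hx
  have hde : d a + e b = 2 := by
    by_contra h
    exact hx (apply_eq_zero_of_smul_sub_diagonal_mul_sub_mul_diagonal_eq_zero hcomm
      (by exact_mod_cast h))
  have hsq := pow_le_one₀ (n := 2) (norm_nonneg _) hnorm
  have hab : (Sum.inl a : Fin j ⊕ Fin k) ≠ Sum.inr b := Sum.inl_ne_inr
  have hcol_a := (norm_sq_add_norm_sq_apply_le_opNorm_sq _ hab (Sum.inl a)).trans hsq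
  have hcol_b := (norm_sq_add_norm_sq_apply_le_opNorm_sq _ hab (Sum.inr b)).trans hsq
  have hd : ((2 : ℂ)⁻¹ • (1 + diagonal fun i ↦ (d i : ℂ))) a a = ((1 + d a) / 2 : ℝ) := by
    simp only [Matrix.smul_apply, Matrix.add_apply, one_apply_eq, diagonal_apply_eq, smul_eq_mul]
    push_cast
    ring
  have he : (-((2 : ℂ)⁻¹ • (1 + diagonal fun i ↦ (e i : ℂ)))) b b = (-(1 + e b) / 2 : ℝ) := by
    simp only [Matrix.neg_apply, Matrix.smul_apply, Matrix.add_apply, one_apply_eq,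
      diagonal_apply_eq, smul_eq_mul]
    push_cast
    ring
  simp only [fromBlocks_apply₁₁, fromBlocks_apply₂₁, fromBlocks_apply₁₂, fromBlocks_apply₂₂, hd,
    he, Complex.norm_real, Real.norm_eq_abs, sq_abs, Matrix.smul_apply, conjTranspose_apply,
    smul_eq_mul, norm_mul, norm_star, norm_inv, Complex.norm_ofNat] at hcol_a hcol_b
  have hX : ‖X a b‖ ≠ 0 := norm_ne_zero_iff.mpr hx
  nlinarith [sq_nonneg (d a - e b), sq_pos_of_ne_zero hX]
end
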